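/- arXiv:1010.5344 — 2 statements merged into one kernel-verified Lean document; each statement's English description precedes it below -/
import Mathlib

section
/- For θ ≥ 0 with m the unique integer satisfying m − 1/2 ≤ θ < m + 1/2, the sum l_D^θ = l_2^θ + span{e_1, …, e_m} is a direct sum; that is, if x ∈ l_2^θ and complex numbers c_1, …, c_m satisfy x + Σ_{k=1}^m c_k e_k = 0 as sequences, then x = 0 and all c_k = 0. -/
/-!
Suppose some `c_j ≠ 0`, and let `p` be the smallest index of the same parity as `j` with
`c_p ≠ 0`. On the integers `k ≡ p (mod 2)` the relation gives
`x_k = -∑ c_j k^{-j}` over indices of that parity, a sum dominated by its leading term `c_p k^{-p}`.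
Hence `|x_k|² k^{2θ} ≳ k^{2θ - 2p} ≥ k^{-1}` since `p ≤ m ≤ θ + 1/2`, and the weighted series
diverges as the harmonic series does on a residue class.
-/

open Filter Asymptotics Finset

lemma isLittleO_rpow_neg_rpow_neg {a b : ℝ} (hab : a < b) :
    (fun t : ℝ => t ^ (-b)) =o[atTop] fun t => t ^ (-a) := by
  refine (isLittleO_iff_tendsto' ?_).2 ?_
  · filter_upwards [eventually_gt_atTop 0] with t ht h
    exact absurd h (Real.rpow_pos_of_pos ht _).ne'
  · refine (tendsto_rpow_neg_atTop (sub_pos.2 hab)).congr' ?_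
    filter_upwards [eventually_gt_atTop 0] with t ht
    rw [← Real.rpow_sub ht]
    ring_nf

lemma eventually_le_norm_sum_rpow_neg_smul {E ι : Type*} [NormedAddCommGroup E] [NormedSpace ℝ E]
    {s : Finset ι} {e : ι → ℝ} {v : ι → E} {p : ι} (hp : p ∈ s) (hvp : v p ≠ 0)
    (he : ∀ j ∈ s, j ≠ p → e p < e j) :
    ∀ᶠ t in atTop, ‖v p‖ / 2 * t ^ (-e p) ≤ ‖∑ j ∈ s, t ^ (-e j) • v j‖ := by
  classical
  have hrest : (fun t : ℝ => ∑ j ∈ s.erase p, t ^ (-e j) • v j) =o[atTop] fun t => t ^ (-e p) :=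
    IsLittleO.fun_sum fun j hj => by
      have hlt := isLittleO_rpow_neg_rpow_neg (he j (mem_of_mem_erase hj) (ne_of_mem_erase hj))
      simpa using hlt.smul_isBigO (isBigO_const_const (v j) (one_ne_zero' ℝ) atTop)
  filter_upwards [hrest.bound (half_pos (norm_pos_iff.2 hvp)), eventually_gt_atTop 0]
    with t hbound ht
  have hlead : ‖t ^ (-e p) • v p‖ = t ^ (-e p) * ‖v p‖ := by
    rw [norm_smul, Real.norm_of_nonneg (Real.rpow_nonneg ht.le _)]
  rw [Real.norm_of_nonneg (Real.rpow_nonneg ht.le _)] at hbound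
  rw [← add_sum_erase s _ hp]
  linarith [norm_le_add_norm_add (t ^ (-e p) • v p) (∑ j ∈ s.erase p, t ^ (-e j) • v j)]

lemma div_le_sq_mul_rpow_of_mul_rpow_neg_le {a y q θ t : ℝ} (ha : 0 ≤ a) (ht : 1 ≤ t)
    (hq : q ≤ θ + 1 / 2) (h : a * t ^ (-q) ≤ y) : a ^ 2 / t ≤ y ^ 2 * t ^ (2 * θ) := by
  have ht0 : 0 < t := one_pos.trans_le ht
  calc a ^ 2 / t = a ^ 2 * t ^ (-1 : ℝ) := by rw [Real.rpow_neg_one, div_eq_mul_inv]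
    _ ≤ a ^ 2 * t ^ (-q * 2 + 2 * θ) := by
        gcongr
        linarith
    _ = (a * t ^ (-q)) ^ 2 * t ^ (2 * θ) := by
        rw [Real.rpow_add ht0, Real.rpow_mul ht0.le, Real.rpow_two]
        ring
    _ ≤ y ^ 2 * t ^ (2 * θ) := by gcongr

lemma not_summable_of_eventually_div_le {f : ℕ → ℝ} (hf : 0 ≤ f) {d : ℕ} (hd : d ≠ 0)
    (r : ZMod d) {a : ℝ} (ha : 0 < a) (h : ∀ᶠ n : ℕ in atTop, (n : ZMod d) = r → a / n ≤ f n) :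
    ¬ Summable f := fun hsum =>
  Real.not_summable_indicator_one_div_natCast hd r <|
    (hsum.mul_left a⁻¹).of_norm_bounded_eventually_nat <| by
      filter_upwards [h] with n hn
      by_cases hr : (n : ZMod d) = r
      · rw [Set.indicator_of_mem (s := {n : ℕ | (n : ZMod d) = r}) hr,
          Real.norm_of_nonneg (by positivity), le_inv_mul_iff₀ ha, mul_one_div]
        exact hn hr
      · rw [Set.indicator_of_notMem (s := {n : ℕ | (n : ZMod d) = r}) hr, norm_zero]
        exact mul_nonneg (inv_nonneg.2 ha.le) (hf n)

lemma not_summable_sq_mul_rpow_of_norm_eq_sum {E ι : Type*} [NormedAddCommGroup E]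
    [NormedSpace ℝ E] {x : ℕ+ → E} {θ : ℝ} {d : ℕ} (hd : d ≠ 0) (r : ZMod d) {s : Finset ι}
    {e : ι → ℝ} {v : ι → E} {p : ι} (hp : p ∈ s) (hvp : v p ≠ 0)
    (he : ∀ j ∈ s, j ≠ p → e p < e j) (hpθ : e p ≤ θ + 1 / 2)
    (hx : ∀ k : ℕ+, ((k : ℕ) : ZMod d) = r → ‖x k‖ = ‖∑ j ∈ s, (k : ℝ) ^ (-e j) • v j‖) :
    ¬ Summable fun k : ℕ+ => ‖x k‖ ^ 2 * (k : ℝ) ^ (2 * θ) := by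
  intro hsum
  refine not_summable_of_eventually_div_le (f := fun n : ℕ => ‖x n.toPNat'‖ ^ 2 * n ^ (2 * θ))
    (fun n => by positivity) hd r (a := (‖v p‖ / 2) ^ 2) (by positivity) ?_
    (summable_pnat_iff_summable_nat.1 (by simpa using hsum))
  filter_upwards [tendsto_natCast_atTop_atTop.eventually
    (eventually_le_norm_sum_rpow_neg_smul hp hvp he), eventually_ge_atTop 1] with n hn hn1 hnr
  have hk : (n.toPNat' : ℕ) = n := PNat.toPNat'_coe hn1
  exact div_le_sq_mul_rpow_of_mul_rpow_neg_le (by positivity) (by exact_mod_cast hn1) hpθ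
    (by rwa [hx _ (hk ▸ hnr), hk])

theorem stmt2_general (θ : ℝ) (m : ℕ) (hm1 : (m : ℝ) - 1 / 2 ≤ θ)
    (x : ℕ+ → ℂ)
    (hx : Summable (fun k : ℕ+ => ‖x k‖ ^ 2 * (k : ℝ) ^ (2 * θ)))
    (c : Fin m → ℂ)
    (hsum : ∀ k : ℕ+,
      x k + ∑ j : Fin m,
        c j * (if (k : ℕ) % 2 = ((j : ℕ) + 1) % 2
          then ((k : ℝ) ^ (-(((j : ℕ) + 1 : ℕ) : ℝ)) : ℝ) else 0) = 0) :
    (∀ k, x k = 0) ∧ ∀ j, c j = 0 := by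
  suffices hc : ∀ j, c j = 0 from ⟨fun k => by simpa [hc] using hsum k, hc⟩
  by_contra! ⟨j₀, hj₀⟩
  set r : ZMod 2 := (((j₀ : ℕ) + 1 : ℕ) : ZMod 2)
  set s := univ.filter fun j : Fin m => (((j : ℕ) + 1 : ℕ) : ZMod 2) = r ∧ c j ≠ 0
  obtain ⟨p, hps, hpmin⟩ :=
    s.exists_min_image (fun j => (j : ℕ)) ⟨j₀, mem_filter.2 ⟨mem_univ _, rfl, hj₀⟩⟩
  refine not_summable_sq_mul_rpow_of_norm_eq_sum (e := fun j : Fin m => (((j : ℕ) + 1 : ℕ) : ℝ))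
    two_ne_zero r hps (mem_filter.1 hps).2.2 (fun j hj hjp => ?_) ?_ (fun k hk => ?_) hx
  · have := Fin.val_ne_of_ne hjp
    have := hpmin j hj
    norm_cast
    omega
  · have hpm : (((p : ℕ) + 1 : ℕ) : ℝ) ≤ m := by exact_mod_cast p.isLt
    linarith
  · rw [eq_neg_of_add_eq_zero_left (hsum k), norm_neg, sum_filter]
    congr 1
    refine sum_congr rfl fun j _ => ?_
    simp only [← ZMod.natCast_eq_natCast_iff', hk, eq_comm (a := r)]
    by_cases hpar : (((j : ℕ) + 1 : ℕ) : ZMod 2) = r <;> by_cases hcj : c j = 0 <;>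
      simp [hpar, hcj, Complex.real_smul, mul_comm, -Nat.cast_add]

/-- The sum `l_D^θ = l_2^θ ⊕ span{e_1,…,e_m}` is direct: if `x ∈ l_2^θ` and
`x + ∑_{j=1}^m c_j e_j = 0` as sequences, then `x = 0` and all `c_j = 0`.
Here `m` is the unique integer with `m - 1/2 ≤ θ < m + 1/2`, and
`(e_p)_k = k^{-p}` when `k ≡ p (mod 2)`, `0` otherwise. -/
theorem stmt2 (θ : ℝ) (hθ : 0 ≤ θ) (m : ℕ) (hm1 : (m : ℝ) - 1 / 2 ≤ θ)
    (hm2 : θ < (m : ℝ) + 1 / 2)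
    (x : ℕ+ → ℂ)
    (hx : Summable (fun k : ℕ+ => ‖x k‖ ^ 2 * (k : ℝ) ^ (2 * θ)))
    (c : Fin m → ℂ)
    (hsum : ∀ k : ℕ+,
      x k + ∑ j : Fin m,
        c j * (if (k : ℕ) % 2 = ((j : ℕ) + 1) % 2
          then ((k : ℝ) ^ (-(((j : ℕ) + 1 : ℕ) : ℝ)) : ℝ) else 0) = 0) :
    (∀ k, x k = 0) ∧ ∀ j, c j = 0 :=
  stmt2_general θ m hm1 x hx c hsum
end

section
/- Let q ∈ L^1[0,π] be real-valued, let y(x,λ) be a solution of −y'' + q y = λ y on [0,π] with y(0,λ) = 0, and let z(x,μ) be a solution of −z'' + q z = μ z on [0,π] with z(π,μ) = 0, where μ ≠ λ. Then 2∫_0^π y(x,λ) z(x,μ) ( y(x,λ) z'(x,μ) − y'(x,λ) z(x,μ) ) dx = (1/(λ−μ)) [ y(π,λ)² z'(π,μ)² − y'(0,λ)² z(0,μ)² ]. -/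
open Set

/-- Wronskian identity for two Sturm–Liouville solutions: if `-y'' + q y = λ y`
with `y(0) = 0` and `-z'' + q z = μ z` with `z(π) = 0`, `λ ≠ μ`, then
`2∫_0^π y z (y z' - y' z) dx = (1/(λ-μ)) [ y(π)² z'(π)² - y'(0)² z(0)² ]`. -/
theorem stmt4 (q y y' y'' z z' z'' : ℝ → ℝ) (lam mu : ℝ)
    (hy1 : ∀ x ∈ Icc (0 : ℝ) Real.pi, HasDerivAt y (y' x) x)
    (hy2 : ∀ x ∈ Icc (0 : ℝ) Real.pi, HasDerivAt y' (y'' x) x)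
    (hz1 : ∀ x ∈ Icc (0 : ℝ) Real.pi, HasDerivAt z (z' x) x)
    (hz2 : ∀ x ∈ Icc (0 : ℝ) Real.pi, HasDerivAt z' (z'' x) x)
    (heqy : ∀ x ∈ Icc (0 : ℝ) Real.pi, -y'' x + q x * y x = lam * y x)
    (heqz : ∀ x ∈ Icc (0 : ℝ) Real.pi, -z'' x + q x * z x = mu * z x)
    (hy0 : y 0 = 0) (hzπ : z Real.pi = 0) (hne : lam ≠ mu) :
    2 * ∫ x in (0:ℝ)..Real.pi,
        y x * z x * (y x * z' x - y' x * z x)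
      = (1 / (lam - mu)) *
        ((y Real.pi * z' Real.pi) ^ 2 - (y' 0 * z 0) ^ 2) := by
  have hπ : (0:ℝ) ≤ Real.pi := Real.pi_pos.le
  have hsub : lam - mu ≠ 0 := sub_ne_zero.mpr hne
  set W : ℝ → ℝ := fun x => y x * z' x - y' x * z x with hWdef
  set F : ℝ → ℝ := fun x => (1 / (lam - mu)) * W x ^ 2 with hFdef
  have hF : ∀ x ∈ Icc (0:ℝ) Real.pi,
      HasDerivAt F (2 * (y x * z x * (y x * z' x - y' x * z x))) x := by
    intro x hx
    have hWd : HasDerivAt W ((lam - mu) * (y x * z x)) x := by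
      have h := ((hy1 x hx).mul (hz2 x hx)).sub ((hy2 x hx).mul (hz1 x hx))
      have e1 : y'' x = q x * y x - lam * y x := by have := heqy x hx; linarith
      have e2 : z'' x = q x * z x - mu * z x := by have := heqz x hx; linarith
      convert h using 1
      all_goals first | rfl | (rw [e1, e2]; ring)
    have h2 := (hWd.mul hWd).const_mul (1 / (lam - mu))
    have : HasDerivAt F (1 / (lam - mu) *
        ((lam - mu) * (y x * z x) * W x + W x * ((lam - mu) * (y x * z x)))) x := by
      convert h2 using 1
      all_goals first | rfl | (simp only [hFdef, Pi.mul_apply]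
                               funext t
                               ring)
    convert this using 1
    field_simp [hWdef]
    ring
  have hcont : ContinuousOn (fun x => 2 * (y x * z x * (y x * z' x - y' x * z x)))
      (Icc (0:ℝ) Real.pi) := by
    have cy : ContinuousOn y (Icc 0 Real.pi) :=
      fun x hx => (hy1 x hx).continuousAt.continuousWithinAt
    have cy' : ContinuousOn y' (Icc 0 Real.pi) :=
      fun x hx => (hy2 x hx).continuousAt.continuousWithinAt
    have cz : ContinuousOn z (Icc 0 Real.pi) :=
      fun x hx => (hz1 x hx).continuousAt.continuousWithinAt
    have cz' : ContinuousOn z' (Icc 0 Real.pi) :=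
      fun x hx => (hz2 x hx).continuousAt.continuousWithinAt
    exact (continuousOn_const.mul (((cy.mul cz).mul ((cy.mul cz').sub (cy'.mul cz)))))
  have hint : IntervalIntegrable (fun x => 2 * (y x * z x * (y x * z' x - y' x * z x)))
      MeasureTheory.volume 0 Real.pi := by
    apply ContinuousOn.intervalIntegrable
    rwa [uIcc_of_le hπ]
  have key := intervalIntegral.integral_eq_sub_of_hasDerivAt
    (f := F) (f' := fun x => 2 * (y x * z x * (y x * z' x - y' x * z x)))
    (by rwa [uIcc_of_le hπ]) hint
  rw [← intervalIntegral.integral_const_mul] at *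
  rw [key]
  simp only [hFdef, hWdef, hy0, hzπ]
  ring
end
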